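/- Let u ∈ C([0,T]; Ḣ^{1/2}(ℝ³)), 0 < T < ∞. For every sufficiently small ε > 0 there exists l₀ > 0 such that for all t ∈ [0,T] and all λ = 2^{2^{2^l}} with l ≥ l₀, the rescaled function x ↦ λ u(t, λx) satisfies ‖λ u(t, λ·)‖_{X₁} ≤ ε. -/

import Mathlib

/-!
Rescaling by `λ = 2^M` shifts the dyadic blocks: `‖λ v(λ·)‖²_{X₁} = Σ_j 2^j a(j+M)⁻² ‖Δ_j v‖²`.
For `M = 2^(2^l)` and `|j| ≤ l` the index `j + M` is one of the sparse indices, where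
`a(j + M) ≥ 2^l - 1`, so these blocks are damped by `4^(-l)`; the blocks with `|j| > l` are
bounded by the tail of the `Ḣ^{1/2}` norm. Hence `‖λ v(λ·)‖²_{X₁} ≤ 8 W_l(v)`, where
`W_l(v) = Σ_j w_l(j) ‖Δ_j v‖²_{Ḣ^{1/2}}` with weights `w_l ≤ 1` tending to `0` pointwise.
For each `t`, `W_l(u t) → 0` by dominated convergence; the convergence is uniform on `[0,T]` by
compactness, because `W_l(v) ≤ 2 ‖v - w‖²_{Ḣ^{1/2}} + 2 W_l(w)` and `u` is continuous.
-/

open MeasureTheory Real ENNReal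
open scoped FourierTransform Classical

noncomputable section

abbrev E3 := EuclideanSpace ℝ (Fin 3)

def annulus (j : ℤ) : Set E3 := {ξ : E3 | (2:ℝ)^(j-1) ≤ ‖ξ‖ ∧ ‖ξ‖ < (2:ℝ)^j}

def sparse (j : ℤ) : Prop :=
  ∃ k : ℕ, 1 ≤ k ∧ ∃ i : ℤ, -(k:ℤ) ≤ i ∧ i ≤ (k:ℤ) ∧ j = i + 2 ^ (2 ^ k)

noncomputable def aSeq (j : ℤ) : ℝ := if sparse j then Real.logb 2 (j:ℝ) else 1

def blockNormSq (v : E3 → ℂ) (j : ℤ) : ℝ≥0∞ :=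
  ∫⁻ ξ in annulus j, (‖𝓕 v ξ‖₊ : ℝ≥0∞) ^ 2

/-- `‖v‖²_{X₁} = Σ_{j∈ℤ} 2^j a(j)^{-2} ‖Δ_j v‖²_{L²}`. -/
def X1normSq (v : E3 → ℂ) : ℝ≥0∞ :=
  ∑' j : ℤ, (2:ℝ≥0∞) ^ j * (ENNReal.ofReal (aSeq j))⁻¹ ^ 2 * blockNormSq v j

/-- Squared `Ḣ^{1/2}` distance between two functions. -/
def HhalfDistSq (v w : E3 → ℂ) : ℝ≥0∞ :=
  ∫⁻ ξ : E3, (‖ξ‖₊ : ℝ≥0∞) * (‖𝓕 v ξ - 𝓕 w ξ‖₊ : ℝ≥0∞) ^ 2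

open Filter Topology Function

namespace MeasureTheory.Measure

variable {V : Type*} [NormedAddCommGroup V] [NormedSpace ℝ V] [MeasurableSpace V] [BorelSpace V]
  [FiniteDimensional ℝ V]

theorem lintegral_comp_smul (μ : Measure V) [μ.IsAddHaarMeasure] (F : V → ℝ≥0∞) {r : ℝ}
    (hr : r ≠ 0) :
    ∫⁻ x, F (r • x) ∂μ = ENNReal.ofReal |(r ^ Module.finrank ℝ V)⁻¹| * ∫⁻ x, F x ∂μ := by
  rw [← smul_eq_mul, ← lintegral_smul_measure, ← map_addHaar_smul μ hr]
  exact (lintegral_map_equiv F (MeasurableEquiv.smul₀ r hr)).symm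

theorem setLIntegral_comp_smul (μ : Measure V) [μ.IsAddHaarMeasure] (F : V → ℝ≥0∞) {r : ℝ}
    (hr : r ≠ 0) {s : Set V} (hs : MeasurableSet s) :
    ∫⁻ x in (r • ·) ⁻¹' s, F (r • x) ∂μ =
      ENNReal.ofReal |(r ^ Module.finrank ℝ V)⁻¹| * ∫⁻ x in s, F x ∂μ := by
  rw [← lintegral_indicator hs, ← μ.lintegral_comp_smul _ hr,
    ← lintegral_indicator (measurable_const_smul r hs)]
  rfl

end MeasureTheory.Measure

section Fourier

variable {V E : Type*} [NormedAddCommGroup V] [InnerProductSpace ℝ V] [MeasurableSpace V]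
  [BorelSpace V] [FiniteDimensional ℝ V] [NormedAddCommGroup E] [NormedSpace ℂ E]

theorem Real.fourier_comp_smul (f : V → E) {r : ℝ} (hr : r ≠ 0) (ξ : V) :
    𝓕 (fun x => f (r • x)) ξ = |(r ^ Module.finrank ℝ V)⁻¹| • 𝓕 f (r⁻¹ • ξ) := by
  simp only [Real.fourier_eq]
  rw [← Measure.integral_comp_smul volume _ r]
  congr 1 with x
  rw [real_inner_smul_left, real_inner_smul_right, mul_inv_cancel_left₀ hr]

theorem Real.fourier_const_smul (c : ℂ) (f : V → E) (ξ : V) :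
    𝓕 (fun x => c • f x) ξ = c • 𝓕 f ξ := by
  simp only [Real.fourier_eq, ← integral_smul]
  congr 1 with x
  exact smul_comm _ _ _

theorem Real.fourier_zero_apply (ξ : V) : 𝓕 (0 : V → E) ξ = 0 := by
  simp [Real.fourier_eq]

theorem Real.continuous_fourier_fun (f : V → E) : Continuous (𝓕 f) := by
  by_cases hf : Integrable f
  · exact VectorFourier.fourierIntegral_continuous Real.continuous_fourierChar
      continuous_inner hf
  · have : 𝓕 f = 0 := by
      ext ξ
      exact integral_undef fun h => hf ((Real.fourierIntegral_convergent_iff ξ).1 h)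
    rw [this]
    exact continuous_const

end Fourier

theorem measurableSet_annulus (j : ℤ) : MeasurableSet (annulus j) :=
  (measurableSet_le measurable_const measurable_norm).inter
    (measurableSet_lt measurable_norm measurable_const)

theorem pairwise_disjoint_annulus : Pairwise (Disjoint on annulus) := by
  intro i j hij
  wlog h : i < j generalizing i j
  · exact (this hij.symm (by omega)).symm
  refine Set.disjoint_left.2 fun ξ hi hj => ?_
  have : (2:ℝ) ^ i ≤ 2 ^ (j - 1) := zpow_le_zpow_right₀ (by norm_num) (by omega)
  linarith [hi.2, hj.1]

theorem zpow_smul_mem_annulus_iff (m j : ℤ) (ξ : E3) :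
    (2:ℝ) ^ m • ξ ∈ annulus j ↔ ξ ∈ annulus (j - m) := by
  have h2m : (0:ℝ) < 2 ^ m := by positivity
  have hshift : ∀ a : ℤ, (2:ℝ) ^ a = 2 ^ m * 2 ^ (a - m) := fun a => by
    rw [← zpow_add₀ two_ne_zero, add_sub_cancel]
  simp only [annulus, Set.mem_ofPred_eq, norm_smul, Real.norm_eq_abs, abs_of_pos h2m]
  rw [hshift (j - 1), hshift j, mul_le_mul_iff_right₀ h2m, mul_lt_mul_iff_right₀ h2m,
    show j - 1 - m = j - m - 1 by ring]

theorem blockNormSq_rescale (v : E3 → ℂ) (M : ℕ) (j : ℤ) :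
    blockNormSq (fun x => (((2:ℝ) ^ M : ℝ) : ℂ) * v (((2:ℝ) ^ M) • x)) j =
      (2:ℝ≥0∞) ^ (-(M:ℤ)) * blockNormSq v (j - M) := by
  set r : ℝ := 2 ^ M
  have hr : 0 < r := by positivity
  have hfourier : ∀ ξ, (‖𝓕 (fun x => (r : ℂ) * v (r • x)) ξ‖₊ : ℝ≥0∞) ^ 2 =
      ENNReal.ofReal ((r ^ 2)⁻¹ ^ 2) * (‖𝓕 v (r⁻¹ • ξ)‖₊ : ℝ≥0∞) ^ 2 := fun ξ => by
    rw [show (fun x => (r : ℂ) * v (r • x)) = fun x => (r : ℂ) • v (r • x) from rfl,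
      Real.fourier_const_smul, Real.fourier_comp_smul v hr.ne', finrank_euclideanSpace_fin,
      nnnorm_smul, nnnorm_smul, ENNReal.coe_mul, ENNReal.coe_mul,
      ← mul_assoc, mul_pow]
    congr 1
    simp only [← enorm_eq_nnnorm, ← ofReal_norm, Complex.norm_real, Real.norm_eq_abs, abs_abs,
      ← ENNReal.ofReal_mul (abs_nonneg _)]
    rw [← ENNReal.ofReal_pow (by positivity)]
    congr 1
    rw [abs_of_pos hr, abs_of_pos (by positivity)]
    field_simp
  have hpreim : (r⁻¹ • ·) ⁻¹' annulus (j - M) = annulus j := by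
    ext ξ
    rw [Set.mem_preimage, show r⁻¹ = (2:ℝ) ^ (-(M:ℤ)) by simp [r], zpow_smul_mem_annulus_iff,
      sub_neg_eq_add, sub_add_cancel]
  have hchange := volume.setLIntegral_comp_smul (fun ξ => (‖𝓕 v ξ‖₊ : ℝ≥0∞) ^ 2)
    (inv_ne_zero hr.ne') (measurableSet_annulus (j - M))
  rw [hpreim, finrank_euclideanSpace_fin] at hchange
  simp_rw [blockNormSq, hfourier]
  rw [lintegral_const_mul' _ _ ENNReal.ofReal_ne_top, hchange, ← mul_assoc,
    ← ENNReal.ofReal_mul (by positivity)]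
  have hconst : (r ^ 2)⁻¹ ^ 2 * |(r⁻¹ ^ 3)⁻¹| = r⁻¹ := by
    rw [abs_of_pos (by positivity)]
    field_simp
  rw [hconst, ENNReal.ofReal_inv_of_pos hr, ENNReal.ofReal_pow zero_le_two,
    ENNReal.ofReal_ofNat, ENNReal.zpow_neg, zpow_natCast]

theorem X1normSq_rescale (v : E3 → ℂ) (M : ℕ) :
    X1normSq (fun x => (((2:ℝ) ^ M : ℝ) : ℂ) * v (((2:ℝ) ^ M) • x)) =
      ∑' j : ℤ, (2:ℝ≥0∞) ^ j * (ENNReal.ofReal (aSeq (j + M)))⁻¹ ^ 2 * blockNormSq v j := by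
  have hcancel : (2:ℝ≥0∞) ^ (M:ℤ) * 2 ^ (-(M:ℤ)) = 1 := by
    rw [← ENNReal.zpow_add two_ne_zero ENNReal.ofNat_ne_top, add_neg_cancel, zpow_zero]
  rw [X1normSq, ← (Equiv.addRight (M:ℤ)).tsum_eq]
  congr 1 with j
  rw [Equiv.coe_addRight, blockNormSq_rescale, add_sub_cancel_right,
    ENNReal.zpow_add two_ne_zero ENNReal.ofNat_ne_top]
  calc _ = 2 ^ j * (ENNReal.ofReal (aSeq (j + M)))⁻¹ ^ 2 * blockNormSq v j *
        ((2:ℝ≥0∞) ^ (M:ℤ) * 2 ^ (-(M:ℤ))) := by ring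
    _ = _ := by rw [hcancel, mul_one]

theorem two_pow_sub_one_le_logb {k : ℕ} {i : ℤ} (hi : -(k:ℤ) ≤ i) :
    (2:ℝ) ^ k - 1 ≤ Real.logb 2 ((i + 2 ^ 2 ^ k : ℤ) : ℝ) := by
  obtain ⟨n, hn⟩ : ∃ n, 2 ^ k = n + 1 := ⟨2 ^ k - 1, by have := Nat.one_le_two_pow (n := k); omega⟩
  have hkn : k ≤ n := by have := Nat.lt_two_pow_self (n := k); omega
  have hn2 : n < 2 ^ n := Nat.lt_two_pow_self
  have hlow : (2:ℤ) ^ n ≤ i + 2 ^ 2 ^ k := by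
    rw [hn, pow_succ]
    have : (n:ℤ) < 2 ^ n := by exact_mod_cast hn2
    omega
  have hcast : (2:ℝ) ^ k - 1 = n := by
    rw [sub_eq_iff_eq_add]; exact_mod_cast hn
  have hpos : (0:ℝ) < ((i + 2 ^ 2 ^ k : ℤ) : ℝ) := by
    have : (0:ℤ) < 2 ^ n := by positivity
    exact_mod_cast this.trans_le hlow
  rw [hcast, Real.le_logb_iff_rpow_le one_lt_two hpos, Real.rpow_natCast]
  exact_mod_cast hlow

theorem one_le_aSeq (j : ℤ) : 1 ≤ aSeq j := by
  unfold aSeq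
  split_ifs with hj
  · obtain ⟨k, hk, i, hi, -, rfl⟩ := hj
    have : (2:ℝ) ≤ 2 ^ k := by simpa using pow_le_pow_right₀ one_le_two hk
    linarith [two_pow_sub_one_le_logb hi]
  · exact le_rfl

def dyadicWeight (l : ℕ) (j : ℤ) : ℝ≥0∞ := if j.natAbs ≤ l then ((4:ℝ≥0∞) ^ l)⁻¹ else 1

theorem dyadicWeight_le_one (l : ℕ) (j : ℤ) : dyadicWeight l j ≤ 1 := by
  unfold dyadicWeight
  split_ifs
  · exact ENNReal.inv_le_one.2 (one_le_pow₀ (by norm_num))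
  · exact le_rfl

theorem tendsto_dyadicWeight (j : ℤ) : Tendsto (dyadicWeight · j) atTop (𝓝 0) := by
  have hpow : Tendsto (fun l : ℕ => ((4:ℝ≥0∞) ^ l)⁻¹) atTop (𝓝 0) := by
    simp_rw [ENNReal.inv_pow]
    exact ENNReal.tendsto_pow_atTop_nhds_zero_of_lt_one (by norm_num)
  refine hpow.congr' ?_
  filter_upwards [eventually_ge_atTop j.natAbs] with l hl
  simp [dyadicWeight, hl]

theorem inv_aSeq_sq_le_dyadicWeight {l : ℕ} (hl : 1 ≤ l) (j : ℤ) :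
    (ENNReal.ofReal (aSeq (j + (2 ^ 2 ^ l : ℕ))))⁻¹ ^ 2 ≤ 4 * dyadicWeight l j := by
  have ha := one_le_aSeq (j + (2 ^ 2 ^ l : ℕ))
  unfold dyadicWeight
  split_ifs with hj
  · have hsparse : sparse (j + (2 ^ 2 ^ l : ℕ)) :=
      ⟨l, hl, j, by omega, by omega, by push_cast; ring⟩
    have hlog := two_pow_sub_one_le_logb (k := l) (i := j) (by omega)
    have h2l : (2:ℝ) ≤ 2 ^ l := by simpa using pow_le_pow_right₀ one_le_two hl
    rw [aSeq, if_pos hsparse] at ha ⊢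
    push_cast at ha hlog ⊢
    set a := Real.logb 2 (j + 2 ^ 2 ^ l)
    have hpos : 0 < a := by linarith
    have hweight : (4:ℝ≥0∞) * (4 ^ l)⁻¹ = ENNReal.ofReal (4 / 4 ^ l) := by
      rw [ENNReal.ofReal_div_of_pos (by positivity), ENNReal.ofReal_pow (by norm_num)]
      norm_num [div_eq_mul_inv]
    rw [← ENNReal.ofReal_inv_of_pos hpos, ← ENNReal.ofReal_pow (by positivity), hweight]
    refine ENNReal.ofReal_le_ofReal ?_
    calc a⁻¹ ^ 2 = 4 / (2 * a) ^ 2 := by field_simp; ring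
      _ ≤ 4 / (2 ^ l) ^ 2 := by gcongr; linarith
      _ = 4 / 4 ^ l := by rw [← pow_mul, mul_comm, pow_mul]; norm_num
  · calc _ ≤ (1:ℝ≥0∞) := pow_le_one₀ zero_le (ENNReal.inv_le_one.2 (ENNReal.one_le_ofReal.2 ha))
      _ ≤ 4 * 1 := by norm_num

theorem coe_nnnorm_sub_sq_le {G : Type*} [SeminormedAddCommGroup G] (a b c : G) :
    (‖a - c‖₊ : ℝ≥0∞) ^ 2 ≤ 2 * (‖a - b‖₊ : ℝ≥0∞) ^ 2 + 2 * (‖b - c‖₊ : ℝ≥0∞) ^ 2 := by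
  have htri : ‖a - c‖₊ ≤ ‖a - b‖₊ + ‖b - c‖₊ := norm_sub_le_norm_sub_add_norm_sub a b c
  have h : ‖a - c‖₊ ^ 2 ≤ 2 * (‖a - b‖₊ ^ 2 + ‖b - c‖₊ ^ 2) :=
    (pow_le_pow_left₀ zero_le htri 2).trans add_sq_le
  rw [← mul_add]
  exact_mod_cast h

def hhalfBlockDistSq (v w : E3 → ℂ) (j : ℤ) : ℝ≥0∞ :=
  ∫⁻ ξ in annulus j, (‖ξ‖₊ : ℝ≥0∞) * (‖𝓕 v ξ - 𝓕 w ξ‖₊ : ℝ≥0∞) ^ 2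

theorem tsum_hhalfBlockDistSq_le (v w : E3 → ℂ) :
    ∑' j, hhalfBlockDistSq v w j ≤ HhalfDistSq v w := by
  unfold hhalfBlockDistSq
  rw [HhalfDistSq, ← lintegral_iUnion measurableSet_annulus pairwise_disjoint_annulus]
  exact setLIntegral_le_lintegral _ _

theorem hhalfBlockDistSq_le_add (u v w : E3 → ℂ) (j : ℤ) :
    hhalfBlockDistSq u w j ≤ 2 * hhalfBlockDistSq u v j + 2 * hhalfBlockDistSq v w j := by
  have hu := Real.continuous_fourier_fun u
  have hv := Real.continuous_fourier_fun v
  unfold hhalfBlockDistSq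
  rw [← lintegral_const_mul' _ _ ENNReal.ofNat_ne_top,
    ← lintegral_const_mul' _ _ ENNReal.ofNat_ne_top,
    ← lintegral_add_left (by fun_prop)]
  refine lintegral_mono fun ξ => ?_
  calc _ ≤ (‖ξ‖₊ : ℝ≥0∞) *
        (2 * (‖𝓕 u ξ - 𝓕 v ξ‖₊ : ℝ≥0∞) ^ 2 + 2 * (‖𝓕 v ξ - 𝓕 w ξ‖₊ : ℝ≥0∞) ^ 2) := by
        gcongr
        exact coe_nnnorm_sub_sq_le _ _ _
    _ = _ := by ring

theorem two_zpow_mul_blockNormSq_le (v : E3 → ℂ) (j : ℤ) :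
    2 ^ j * blockNormSq v j ≤ 2 * hhalfBlockDistSq v 0 j := by
  unfold blockNormSq hhalfBlockDistSq
  rw [← lintegral_const_mul' _ _ (ENNReal.zpow_ne_top two_ne_zero ENNReal.ofNat_ne_top j),
    ← lintegral_const_mul' _ _ ENNReal.ofNat_ne_top]
  refine setLIntegral_mono' (measurableSet_annulus j) fun ξ hξ => ?_
  have hnorm : (2:ℝ≥0∞) ^ j ≤ 2 * ‖ξ‖₊ := by
    have hreal : (2:ℝ) ^ j ≤ 2 * ‖ξ‖ := by
      have := hξ.1
      rw [zpow_sub_one₀ two_ne_zero] at this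
      linarith
    have hnn : (2:NNReal) ^ j ≤ 2 * ‖ξ‖₊ := by
      rw [← NNReal.coe_le_coe]
      push_cast
      exact hreal
    calc (2:ℝ≥0∞) ^ j = ((2 ^ j : NNReal) : ℝ≥0∞) := by rw [ENNReal.coe_zpow two_ne_zero]; rfl
      _ ≤ 2 * ‖ξ‖₊ := by exact_mod_cast hnn
  rw [Real.fourier_zero_apply, sub_zero, ← mul_assoc]
  gcongr

def weightedHhalfDistSq (l : ℕ) (v w : E3 → ℂ) : ℝ≥0∞ :=
  ∑' j, dyadicWeight l j * hhalfBlockDistSq v w j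

theorem weightedHhalfDistSq_le (l : ℕ) (v w : E3 → ℂ) :
    weightedHhalfDistSq l v w ≤ HhalfDistSq v w :=
  (ENNReal.tsum_le_tsum fun j => mul_le_of_le_one_left' (dyadicWeight_le_one l j)).trans
    (tsum_hhalfBlockDistSq_le v w)

theorem weightedHhalfDistSq_le_add (l : ℕ) (u v w : E3 → ℂ) :
    weightedHhalfDistSq l u w ≤ 2 * HhalfDistSq u v + 2 * weightedHhalfDistSq l v w :=
  calc weightedHhalfDistSq l u w
      ≤ ∑' j, (2 * (dyadicWeight l j * hhalfBlockDistSq u v j) +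
          2 * (dyadicWeight l j * hhalfBlockDistSq v w j)) :=
        ENNReal.tsum_le_tsum fun j =>
          (mul_le_mul_right (hhalfBlockDistSq_le_add u v w j) _).trans_eq (by ring)
    _ = 2 * weightedHhalfDistSq l u v + 2 * weightedHhalfDistSq l v w := by
        rw [ENNReal.tsum_add, ENNReal.tsum_mul_left, ENNReal.tsum_mul_left]
        rfl
    _ ≤ _ := by grw [weightedHhalfDistSq_le l u v]

theorem tendsto_weightedHhalfDistSq {v w : E3 → ℂ} (hvw : HhalfDistSq v w ≠ ⊤) :
    Tendsto (weightedHhalfDistSq · v w) atTop (𝓝 0) := by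
  have hsum : ∑' j, hhalfBlockDistSq v w j ≠ ⊤ :=
    ne_top_of_le_ne_top hvw (tsum_hhalfBlockDistSq_le v w)
  have h := tendsto_lintegral_of_dominated_convergence (μ := Measure.count)
    (F := fun l j => dyadicWeight l j * hhalfBlockDistSq v w j) (f := 0)
    (hhalfBlockDistSq v w) (fun _ => Measurable.of_discrete)
    (fun l => ae_of_all _ fun j => mul_le_of_le_one_left' (dyadicWeight_le_one l j))
    (by rwa [lintegral_count])
    (ae_of_all _ fun j => by
      simpa using ENNReal.Tendsto.mul_const (tendsto_dyadicWeight j)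
        (Or.inr (ENNReal.ne_top_of_tsum_ne_top hsum j)))
  simpa [lintegral_count, weightedHhalfDistSq] using h

theorem X1normSq_rescale_le {l : ℕ} (hl : 1 ≤ l) (v : E3 → ℂ) :
    X1normSq (fun x => (((2:ℝ) ^ (2 ^ (2 ^ l)) : ℝ) : ℂ) * v (((2:ℝ) ^ (2 ^ (2 ^ l)) : ℝ) • x)) ≤
      8 * weightedHhalfDistSq l v 0 := by
  rw [X1normSq_rescale, weightedHhalfDistSq, ← ENNReal.tsum_mul_left]
  refine ENNReal.tsum_le_tsum fun j => ?_
  calc _ = (ENNReal.ofReal (aSeq (j + (2 ^ 2 ^ l : ℕ))))⁻¹ ^ 2 * (2 ^ j * blockNormSq v j) := by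
        ring
    _ ≤ (4 * dyadicWeight l j) * (2 * hhalfBlockDistSq v 0 j) :=
        mul_le_mul' (inv_aSeq_sq_le_dyadicWeight hl j) (two_zpow_mul_blockNormSq_le v j)
    _ = 8 * (dyadicWeight l j * hhalfBlockDistSq v 0 j) := by ring

theorem IsCompact.eventually_forall_of_forall_exists_nhdsWithin {X ι : Type*}
    [TopologicalSpace X] {K : Set X} (hK : IsCompact K) {l : Filter ι} {P : ι → X → Prop}
    (h : ∀ x ∈ K, ∃ U ∈ 𝓝[K] x, ∀ᶠ i in l, ∀ y ∈ U, P i y) :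
    ∀ᶠ i in l, ∀ y ∈ K, P i y :=
  hK.induction_on (p := fun S => ∀ᶠ i in l, ∀ y ∈ S, P i y) (by simp)
    (fun _ _ hST hT => hT.mono fun _ hi y hy => hi y (hST hy))
    (fun _ _ hS hT => (hS.and hT).mono fun _ hi y hy => hy.elim (hi.1 y) (hi.2 y)) h

theorem tendsto_nhdsWithin_zero_of_forall_ofReal_sq {f : ℝ → ℝ≥0∞} {K : Set ℝ} {t : ℝ}
    (hf : ∀ δ : ℝ, 0 < δ → ∃ η : ℝ, 0 < η ∧
      ∀ t' ∈ K, |t' - t| < η → f t' ≤ ENNReal.ofReal (δ ^ 2)) :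
    Tendsto f (𝓝[K] t) (𝓝 0) := by
  refine ENNReal.tendsto_nhds_zero.2 fun c hc => ?_
  obtain ⟨r, -, hr, hrc⟩ := ENNReal.lt_iff_exists_real_btwn.1 hc
  obtain ⟨η, hη, hball⟩ := hf (Real.sqrt r) (Real.sqrt_pos.2 (ENNReal.ofReal_pos.1 hr))
  filter_upwards [inter_mem_nhdsWithin K (Metric.ball_mem_nhds t hη)] with s ⟨hsK, hs⟩
  rw [Metric.mem_ball, Real.dist_eq] at hs
  refine (hball s hsK hs).trans ?_
  rw [Real.sq_sqrt (ENNReal.ofReal_pos.1 hr).le]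
  exact hrc.le

theorem eventually_forall_weightedHhalfDistSq_le {X : Type*} [TopologicalSpace X] {K : Set X}
    (hK : IsCompact K) (u : X → E3 → ℂ) (hfin : ∀ t ∈ K, HhalfDistSq (u t) 0 ≠ ⊤)
    (hcont : ∀ t ∈ K, Tendsto (fun s => HhalfDistSq (u s) (u t)) (𝓝[K] t) (𝓝 0))
    {c : ℝ≥0∞} (hc : 0 < c) :
    ∀ᶠ l in atTop, ∀ t ∈ K, weightedHhalfDistSq l (u t) 0 ≤ c := by
  refine hK.eventually_forall_of_forall_exists_nhdsWithin fun t ht => ?_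
  have hc4 : 0 < c / 4 := ENNReal.div_pos hc.ne' ENNReal.ofNat_ne_top
  refine ⟨_, ENNReal.tendsto_nhds_zero.1 (hcont t ht) _ hc4, ?_⟩
  filter_upwards [ENNReal.tendsto_nhds_zero.1 (tendsto_weightedHhalfDistSq (hfin t ht)) _ hc4]
    with l hl s hs
  calc weightedHhalfDistSq l (u s) 0
      ≤ 2 * HhalfDistSq (u s) (u t) + 2 * weightedHhalfDistSq l (u t) 0 :=
        weightedHhalfDistSq_le_add l _ _ _
    _ ≤ 2 * (c / 4) + 2 * (c / 4) := by gcongr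
    _ = 4 * (c / 4) := by ring
    _ = c := ENNReal.mul_div_cancel four_ne_zero ENNReal.ofNat_ne_top

theorem stmt13_general (T : ℝ) (u : ℝ → E3 → ℂ)
    (hfin : ∀ t ∈ Set.Icc 0 T, HhalfDistSq (u t) 0 < ⊤)
    (hcont : ∀ t ∈ Set.Icc 0 T, ∀ δ : ℝ, 0 < δ → ∃ η : ℝ, 0 < η ∧
      ∀ t' ∈ Set.Icc 0 T, |t' - t| < η → HhalfDistSq (u t') (u t) ≤ ENNReal.ofReal (δ ^ 2)) :
    ∃ ε₀ : ℝ, 0 < ε₀ ∧ ∀ ε : ℝ, 0 < ε → ε ≤ ε₀ → ∃ l₀ : ℕ, 0 < l₀ ∧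
      ∀ t ∈ Set.Icc 0 T, ∀ l : ℕ, l₀ ≤ l →
        X1normSq (fun x : E3 =>
            (((2:ℝ) ^ (2 ^ (2 ^ l)) : ℝ) : ℂ) * u t (((2:ℝ) ^ (2 ^ (2 ^ l)) : ℝ) • x)) ≤
          ENNReal.ofReal (ε ^ 2) := by
  refine ⟨1, one_pos, fun ε hε _ => ?_⟩
  have hsmall := eventually_forall_weightedHhalfDistSq_le isCompact_Icc u
    (fun t ht => (hfin t ht).ne)
    (fun t ht => tendsto_nhdsWithin_zero_of_forall_ofReal_sq (hcont t ht))
    (ENNReal.div_pos (ENNReal.ofReal_pos.2 (by positivity)).ne' ENNReal.ofNat_ne_top :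
      0 < ENNReal.ofReal (ε ^ 2) / 8)
  obtain ⟨l₀, hl₀⟩ := eventually_atTop.1 (hsmall.and (eventually_ge_atTop 1))
  refine ⟨max l₀ 1, by positivity, fun t ht l hl => ?_⟩
  obtain ⟨hweight, hl1⟩ := hl₀ l (le_of_max_le_left hl)
  calc _ ≤ 8 * weightedHhalfDistSq l (u t) 0 := X1normSq_rescale_le hl1 _
    _ ≤ 8 * (ENNReal.ofReal (ε ^ 2) / 8) := by gcongr; exact hweight t ht
    _ = ENNReal.ofReal (ε ^ 2) := ENNReal.mul_div_cancel (by norm_num) ENNReal.ofNat_ne_top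

/-- let `u ∈ C([0,T]; Ḣ^{1/2}(ℝ³))`, `0 < T < ∞`. For every sufficiently
small `ε > 0` there exists `l₀ > 0` such that for all `t ∈ [0,T]` and all
`λ = 2^(2^(2^l))` with `l ≥ l₀`, one has `‖λ u(t, λ·)‖_{X₁} ≤ ε`. -/
theorem stmt13 (T : ℝ) (hT : 0 < T) (u : ℝ → E3 → ℂ)
    (hfin : ∀ t ∈ Set.Icc 0 T, HhalfDistSq (u t) 0 < ⊤)
    (hcont : ∀ t ∈ Set.Icc 0 T, ∀ δ : ℝ, 0 < δ → ∃ η : ℝ, 0 < η ∧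
      ∀ t' ∈ Set.Icc 0 T, |t' - t| < η → HhalfDistSq (u t') (u t) ≤ ENNReal.ofReal (δ ^ 2)) :
    ∃ ε₀ : ℝ, 0 < ε₀ ∧ ∀ ε : ℝ, 0 < ε → ε ≤ ε₀ → ∃ l₀ : ℕ, 0 < l₀ ∧
      ∀ t ∈ Set.Icc 0 T, ∀ l : ℕ, l₀ ≤ l →
        X1normSq (fun x : E3 =>
            (((2:ℝ) ^ (2 ^ (2 ^ l)) : ℝ) : ℂ) * u t (((2:ℝ) ^ (2 ^ (2 ^ l)) : ℝ) • x)) ≤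
          ENNReal.ofReal (ε ^ 2) :=
  stmt13_general T u hfin hcont
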